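/- Let k be a field and G a finite group. Let X : Rep k G with underlying module V and action ρ, and let (π¹_g)_{g∈G} and (π²_g)_{g∈G} be two conjugation-equivariant systems of projections on V, with associated half-braidings λ¹ and λ² on X (determined by λ^i_A(a ⊗ x) = Σ_g (π^i_g x) ⊗ (ρ_A(g) a)). Then the pair (λ¹, λ²) satisfies COMM if and only if π¹_g ∘ π²_h = π²_h ∘ π¹_g for all g, h ∈ G. -/

import Mathlib

open CategoryTheory CategoryTheory.MonoidalCategory TensorProduct

universe v u

/-!
Both COMM composites can be evaluated on pure tensors: on `(a ⊗ b) ⊗ x` the left one gives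
`∑ g h, π¹_g π²_h x ⊗ (ρ_B(h) b ⊗ ρ_A(g) a)` and the right one the same sum with `π²_h π¹_g x`.
So commuting projections give COMM. Conversely, for `A = B = k[G]` and `a = b = δ₁` the vectors
`δ_h ⊗ δ_g` form a basis of `k[G] ⊗ k[G]`, so COMM forces `π¹_g π²_h x = π²_h π¹_g x`
coefficientwise.
-/

/-- The COMM compatibility condition of an ordered pair of half-braidings `(l₁, l₂)` on an
object `X` of a braided category, where the component `U ⊗ X ⟶ X ⊗ U` of `lᵢ` is
`(lᵢ.β U).inv` in Mathlib's convention. -/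
def COMM {C : Type u} [Category.{v} C] [MonoidalCategory C] [BraidedCategory C]
    {X : C} (l₁ l₂ : HalfBraiding X) : Prop :=
  ∀ A B : C,
    (α_ A B X).hom ≫ (A ◁ (l₂.β B).inv) ≫ (α_ A X B).inv ≫ ((l₁.β A).inv ▷ B) ≫
        (α_ X A B).hom ≫ (X ◁ (β_ A B).hom) =
      ((β_ B A).inv ▷ X) ≫ (α_ B A X).hom ≫ (B ◁ (l₁.β A).inv) ≫ (α_ B X A).inv ≫
        ((l₂.β B).inv ▷ A) ≫ (α_ X B A).hom

lemma TensorProduct.eq_of_sum_tmul_basis_right {R M N ι : Type*} [CommSemiring R]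
    [AddCommMonoid M] [AddCommMonoid N] [Module R M] [Module R N] [Fintype ι]
    (𝒞 : Module.Basis ι R N) {v w : ι → M}
    (h : ∑ i, v i ⊗ₜ[R] 𝒞 i = ∑ i, w i ⊗ₜ[R] 𝒞 i) : v = w := by
  have hsum (u : ι → M) : Finsupp.lsum R (fun i ↦ (TensorProduct.mk R M N).flip (𝒞 i))
      (Finsupp.equivFunOnFinite.symm u) = ∑ i, u i ⊗ₜ[R] 𝒞 i := by
    simp [Finsupp.sum_fintype]
  exact Finsupp.equivFunOnFinite.symm.injective <| TensorProduct.sum_tmul_basis_right_injective 𝒞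
    (a₁ := Finsupp.equivFunOnFinite.symm v) (a₂ := Finsupp.equivFunOnFinite.symm w)
    (by rw [hsum, hsum, h])

lemma MonoidAlgebra.eq_of_sum_tmul_single_tmul_single {R M α : Type*} [CommSemiring R]
    [AddCommMonoid M] [Module R M] [Fintype α] {v w : α → α → M}
    (h : ∑ a, ∑ b, v a b ⊗ₜ[R] (single a (1 : R) ⊗ₜ[R] single b (1 : R)) =
      ∑ a, ∑ b, w a b ⊗ₜ[R] (single a (1 : R) ⊗ₜ[R] single b (1 : R))) : v = w := by
  let 𝒞 := (MonoidAlgebra.basis α R).tensorProduct (MonoidAlgebra.basis α R)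
  have h𝒞 (p : α × α) : 𝒞 p = single p.1 1 ⊗ₜ single p.2 1 := by
    simp [𝒞, Module.Basis.tensorProduct_apply']
  funext a b
  exact congrFun (TensorProduct.eq_of_sum_tmul_basis_right 𝒞 (v := fun p ↦ v p.1 p.2)
    (w := fun p ↦ w p.1 p.2) (by simpa only [h𝒞, Fintype.sum_prod_type] using h)) (a, b)

namespace Rep

variable {k G : Type u} [CommRing k] [Monoid G] {A B C D : Rep k G}

-- The ascriptions give the results the instances of the `Rep` tensor object, so that `simp` can
-- keep rewriting inside them.
lemma associator_hom_tmul (a : A) (b : B) (c : C) :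
    (α_ A B C).hom.hom ((a ⊗ₜ b) ⊗ₜ c) = (a ⊗ₜ (b ⊗ₜ c) : (A ⊗ (B ⊗ C) : Rep k G)) := rfl

lemma associator_inv_tmul (a : A) (b : B) (c : C) :
    (α_ A B C).inv.hom (a ⊗ₜ (b ⊗ₜ c)) = ((a ⊗ₜ b) ⊗ₜ c : ((A ⊗ B) ⊗ C : Rep k G)) := rfl

lemma whiskerLeft_tmul (f : B ⟶ C) (a : A) (b : B) :
    (A ◁ f).hom (a ⊗ₜ b) = a ⊗ₜ f.hom b := rfl

lemma whiskerRight_tmul (f : A ⟶ B) (a : A) (c : C) :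
    (f ▷ C).hom (a ⊗ₜ c) = f.hom a ⊗ₜ c := rfl

lemma braiding_hom_tmul (a : A) (b : B) : (β_ A B).hom.hom (a ⊗ₜ b) = b ⊗ₜ a := rfl

lemma braiding_inv_tmul (a : A) (b : B) : (β_ B A).inv.hom (a ⊗ₜ b) = b ⊗ₜ a := rfl

lemma tensor_ext₃' {f g : (A ⊗ B) ⊗ C ⟶ D}
    (h : ∀ a b c, f.hom ((a ⊗ₜ b) ⊗ₜ c) = g.hom ((a ⊗ₜ b) ⊗ₜ c)) : f = g :=
  hom_ext <| Representation.IntertwiningMap.ext <| TensorProduct.ext_threefold h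

lemma leftRegular_ρ_single_one (g : G) :
    (leftRegular k G).ρ g (MonoidAlgebra.single 1 1) = MonoidAlgebra.single g 1 := by
  simp [Representation.ofMulAction_single]

end Rep

namespace CategoryTheory.HalfBraiding

variable {k G : Type u} [CommRing k] [Monoid G] [Fintype G] {X : Rep k G}

abbrev IsAssociatedTo (l : HalfBraiding X) (π : G → (X →ₗ[k] X)) : Prop :=
  ∀ (A : Rep k G) (a : A) (x : X), (l.β A).inv.hom (a ⊗ₜ[k] x) = ∑ g : G, π g x ⊗ₜ[k] A.ρ g a

variable {π₁ π₂ : G → (X →ₗ[k] X)} {l₁ l₂ : HalfBraiding X}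

lemma comm_lhs_tmul (hl₁ : l₁.IsAssociatedTo π₁) (hl₂ : l₂.IsAssociatedTo π₂)
    (A B : Rep k G) (a : A) (b : B) (x : X) :
    ((α_ A B X).hom ≫ (A ◁ (l₂.β B).inv) ≫ (α_ A X B).inv ≫ ((l₁.β A).inv ▷ B) ≫
        (α_ X A B).hom ≫ (X ◁ (β_ A B).hom)).hom ((a ⊗ₜ b) ⊗ₜ x) =
      ∑ h : G, ∑ g : G, π₁ g (π₂ h x) ⊗ₜ[k] (B.ρ h b ⊗ₜ[k] A.ρ g a) := by
  simp only [Rep.hom_comp, Representation.IntertwiningMap.comp_apply, Rep.associator_hom_tmul,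
    Rep.associator_inv_tmul, Rep.whiskerLeft_tmul, Rep.whiskerRight_tmul, Rep.braiding_hom_tmul,
    hl₁, hl₂, tmul_sum, sum_tmul, map_sum]

lemma comm_rhs_tmul (hl₁ : l₁.IsAssociatedTo π₁) (hl₂ : l₂.IsAssociatedTo π₂)
    (A B : Rep k G) (a : A) (b : B) (x : X) :
    (((β_ B A).inv ▷ X) ≫ (α_ B A X).hom ≫ (B ◁ (l₁.β A).inv) ≫ (α_ B X A).inv ≫
        ((l₂.β B).inv ▷ A) ≫ (α_ X B A).hom).hom ((a ⊗ₜ b) ⊗ₜ x) =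
      ∑ h : G, ∑ g : G, π₂ h (π₁ g x) ⊗ₜ[k] (B.ρ h b ⊗ₜ[k] A.ρ g a) := by
  simp only [Rep.hom_comp, Representation.IntertwiningMap.comp_apply, Rep.associator_hom_tmul,
    Rep.associator_inv_tmul, Rep.whiskerLeft_tmul, Rep.whiskerRight_tmul, Rep.braiding_inv_tmul,
    hl₁, hl₂, tmul_sum, sum_tmul, map_sum]
  exact Finset.sum_comm

end CategoryTheory.HalfBraiding

theorem COMM_iff_projections_commute_general
    {k G : Type u} [Field k] [Group G] [Fintype G] (X : Rep k G)
    (π₁ π₂ : G → (X →ₗ[k] X))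
    (l₁ l₂ : HalfBraiding X)
    (hl₁ : ∀ (A : Rep k G) (a : A) (x : X),
      (l₁.β A).inv.hom (a ⊗ₜ[k] x) = ∑ g : G, (π₁ g x) ⊗ₜ[k] (A.ρ g a))
    (hl₂ : ∀ (A : Rep k G) (a : A) (x : X),
      (l₂.β A).inv.hom (a ⊗ₜ[k] x) = ∑ g : G, (π₂ g x) ⊗ₜ[k] (A.ρ g a)) :
    COMM l₁ l₂ ↔ ∀ g h : G, (π₁ g) ∘ₗ (π₂ h) = (π₂ h) ∘ₗ (π₁ g) := by
  constructor
  · intro hc g h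
    ext x
    have hx := congr(($(hc (Rep.leftRegular k G) (Rep.leftRegular k G))).hom
      ((MonoidAlgebra.single 1 1 ⊗ₜ MonoidAlgebra.single 1 1) ⊗ₜ x))
    rw [HalfBraiding.comm_lhs_tmul hl₁ hl₂, HalfBraiding.comm_rhs_tmul hl₁ hl₂] at hx
    simp only [Rep.leftRegular_ρ_single_one (k := k)] at hx
    exact congrFun₂ (MonoidAlgebra.eq_of_sum_tmul_single_tmul_single hx) h g
  · intro hcomm A B
    refine Rep.tensor_ext₃' fun a b x ↦ ?_
    rw [HalfBraiding.comm_lhs_tmul hl₁ hl₂, HalfBraiding.comm_rhs_tmul hl₁ hl₂]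
    simp only [← LinearMap.comp_apply, hcomm]

/-- For a finite group `G` and `X : Rep k G`, let `π¹`, `π²` be two
conjugation-equivariant systems of projections on the underlying module of `X`, with
associated half-braidings `l₁`, `l₂`. Then `(l₁, l₂)` satisfies COMM if and only if all the
projections of the first system commute with all the projections of the second system. -/
theorem COMM_iff_projections_commute
    {k G : Type u} [Field k] [Group G] [Fintype G] (X : Rep k G)
    (π₁ π₂ : G → (X →ₗ[k] X))
    (hsum₁ : ∑ g : G, π₁ g = LinearMap.id)
    (horth₁ : ∀ g h : G, g ≠ h → (π₁ g) ∘ₗ (π₁ h) = 0)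
    (hidem₁ : ∀ g : G, (π₁ g) ∘ₗ (π₁ g) = π₁ g)
    (hconj₁ : ∀ g h : G, (X.ρ h) ∘ₗ (π₁ g) = (π₁ (h * g * h⁻¹)) ∘ₗ (X.ρ h))
    (hsum₂ : ∑ g : G, π₂ g = LinearMap.id)
    (horth₂ : ∀ g h : G, g ≠ h → (π₂ g) ∘ₗ (π₂ h) = 0)
    (hidem₂ : ∀ g : G, (π₂ g) ∘ₗ (π₂ g) = π₂ g)
    (hconj₂ : ∀ g h : G, (X.ρ h) ∘ₗ (π₂ g) = (π₂ (h * g * h⁻¹)) ∘ₗ (X.ρ h))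
    (l₁ l₂ : HalfBraiding X)
    (hl₁ : ∀ (A : Rep k G) (a : A) (x : X),
      (l₁.β A).inv.hom (a ⊗ₜ[k] x) = ∑ g : G, (π₁ g x) ⊗ₜ[k] (A.ρ g a))
    (hl₂ : ∀ (A : Rep k G) (a : A) (x : X),
      (l₂.β A).inv.hom (a ⊗ₜ[k] x) = ∑ g : G, (π₂ g x) ⊗ₜ[k] (A.ρ g a)) :
    COMM l₁ l₂ ↔ ∀ g h : G, (π₁ g) ∘ₗ (π₂ h) = (π₂ h) ∘ₗ (π₁ g) :=
  COMM_iff_projections_commute_general X π₁ π₂ l₁ l₂ hl₁ hl₂
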